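/- Define the unnormalized measure π on finite lists of customer types by π(c^1,…,c^L) = ∏_{ℓ=1}^{L} λ_{c^ℓ}/μ_{S({c^1,…,c^ℓ})} (with π(empty) = 1). Then π satisfies the global balance equations of the continuous-time Markov chain on lists whose transition rates are: from w = (c^1,…,c^L), append a customer of type c at the end at rate λ_c, and remove the ℓth customer at rate μ_{S(c^ℓ) ∖ S({c^1,…,c^{ℓ−1}})} for each 1 ≤ ℓ ≤ L. Explicitly, for every list w = (c^1,…,c^L): π(w)·(λ̄ + μ_{S({c^1,…,c^L})}) = 𝟙[L ≥ 1]·λ_{c^L}·π(c^1,…,c^{L−1}) + Σ_{c ∈ 𝒞} Σ_{k=0}^{L} μ_{S(c) ∖ S({c^1,…,c^k})} · π(c^1,…,c^k, c, c^{k+1},…,c^L). -/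

import Mathlib

/-!
Write `π_pre(w)` for `qweight R lam mu pre w`, the weight of `w` read after a prefix `pre`;
it depends on `pre` only through `S(pre)`, so `π_{pre c a} = π_{pre a c}`. Using this, an
induction on `w` shows that inserting `c` at every position of `w`, weighted by the rate at
which the inserted customer leaves, gives
`λ_c (π_pre(w) - μ_{S(pre)} / μ_{S(pre c)} · π_{pre c}(w))`.
For `pre = []` the correction term vanishes, so the removal terms of the balance equation add
up to `λ̄ π(w)`, while `π(w) μ_{S(w)}` equals the arrival term of the last customer by the
product form of `π`.
-/

open Finset

def muS {S : Type*} (mu : S → ℝ) (B : Finset S) : ℝ := ∑ s ∈ B, mu s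

def Sc {C S : Type*} [Fintype S] (R : C → S → Prop) [∀ c s, Decidable (R c s)]
    (c : C) : Finset S := Finset.univ.filter fun s => R c s

def SsetL {C S : Type*} [Fintype S] (R : C → S → Prop) [∀ c s, Decidable (R c s)]
    (w : List C) : Finset S := Finset.univ.filter fun s => ∃ c ∈ w, R c s

noncomputable def qweight {C S : Type*} [Fintype S]
    (R : C → S → Prop) [∀ c s, Decidable (R c s)]
    (lam : C → ℝ) (mu : S → ℝ) : List C → List C → ℝ
  | _, [] => 1
  | pre, c :: w =>
      (lam c / muS mu (SsetL R (pre ++ [c]))) * qweight R lam mu (pre ++ [c]) w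

section SsetL

variable {C S : Type*} [Fintype S] (R : C → S → Prop) [∀ c s, Decidable (R c s)]

@[simp]
lemma SsetL_nil : SsetL R ([] : List C) = ∅ := by
  simp [SsetL]

lemma SsetL_singleton (c : C) : SsetL R [c] = Sc R c := by
  ext s
  simp [SsetL, Sc]

variable [DecidableEq S]

lemma SsetL_append (u v : List C) : SsetL R (u ++ v) = SsetL R u ∪ SsetL R v := by
  ext s
  simp [SsetL, or_and_right, exists_or]

lemma SsetL_append_singleton (u : List C) (c : C) :
    SsetL R (u ++ [c]) = SsetL R u ∪ Sc R c := by
  rw [SsetL_append, SsetL_singleton]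

lemma SsetL_append_pair_comm (u : List C) (a c : C) :
    SsetL R (u ++ [a] ++ [c]) = SsetL R (u ++ [c] ++ [a]) := by
  simp only [SsetL_append_singleton, Finset.union_right_comm]

end SsetL

section muS

variable {S : Type*} (mu : S → ℝ)

@[simp]
lemma muS_empty : muS mu ∅ = 0 := Finset.sum_empty

lemma muS_pos (hmu : ∀ s, 0 < mu s) {B : Finset S} (hB : B.Nonempty) : 0 < muS mu B :=
  Finset.sum_pos (fun s _ => hmu s) hB

lemma muS_sdiff [DecidableEq S] (B B' : Finset S) :
    muS mu (B' \ B) = muS mu (B ∪ B') - muS mu B := by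
  rw [eq_sub_iff_add_eq', muS, muS, muS, ← Finset.sum_union Finset.disjoint_sdiff,
    Finset.union_sdiff_self_eq_union]

end muS

section qweight

variable {C S : Type*} [Fintype S]
  (R : C → S → Prop) [∀ c s, Decidable (R c s)] (lam : C → ℝ) (mu : S → ℝ)

lemma qweight_append_singleton (pre u : List C) (b : C) :
    qweight R lam mu pre (u ++ [b]) =
      qweight R lam mu pre u * (lam b / muS mu (SsetL R (pre ++ u ++ [b]))) := by
  induction u generalizing pre with
  | nil => simp [qweight]
  | cons a v ih =>
    rw [List.cons_append, qweight, qweight, ih, List.append_cons pre a v]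
    ring

variable [DecidableEq S]

lemma muS_SsetL_append_singleton_pos (hmu : ∀ s, 0 < mu s)
    (hScne : ∀ c : C, (Sc R c).Nonempty) (pre : List C) (c : C) :
    0 < muS mu (SsetL R (pre ++ [c])) := by
  refine muS_pos mu hmu ((hScne c).mono ?_)
  rw [SsetL_append_singleton]
  exact Finset.subset_union_right

lemma muS_Sc_sdiff_SsetL (pre : List C) (c : C) :
    muS mu (Sc R c \ SsetL R pre) = muS mu (SsetL R (pre ++ [c])) - muS mu (SsetL R pre) := by
  rw [muS_sdiff, SsetL_append_singleton]

lemma qweight_congr_of_SsetL_eq {pre₁ pre₂ : List C} (h : SsetL R pre₁ = SsetL R pre₂)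
    (w : List C) : qweight R lam mu pre₁ w = qweight R lam mu pre₂ w := by
  induction w generalizing pre₁ pre₂ with
  | nil => rfl
  | cons a v ih =>
    have h' : SsetL R (pre₁ ++ [a]) = SsetL R (pre₂ ++ [a]) := by
      rw [SsetL_append, SsetL_append, h]
    rw [qweight, qweight, h', ih h']

lemma qweight_append_singleton_mul_muS (hmu : ∀ s, 0 < mu s)
    (hScne : ∀ c : C, (Sc R c).Nonempty) (u : List C) (b : C) :
    qweight R lam mu [] (u ++ [b]) * muS mu (SsetL R (u ++ [b])) =
      lam b * qweight R lam mu [] u := by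
  have hpos := muS_SsetL_append_singleton_pos R mu hmu hScne u b
  rw [qweight_append_singleton, List.nil_append]
  field_simp

lemma sum_muS_sdiff_mul_qweight_insert (hmu : ∀ s, 0 < mu s)
    (hScne : ∀ c : C, (Sc R c).Nonempty) (w pre : List C) (c : C) :
    ∑ k ∈ Finset.range (w.length + 1),
        muS mu (Sc R c \ SsetL R (pre ++ w.take k)) *
          qweight R lam mu pre (w.take k ++ c :: w.drop k) =
      lam c * (qweight R lam mu pre w -
        muS mu (SsetL R pre) / muS mu (SsetL R (pre ++ [c])) *
          qweight R lam mu (pre ++ [c]) w) := by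
  have hpos := muS_SsetL_append_singleton_pos R mu hmu hScne
  induction w generalizing pre with
  | nil =>
    have hc := hpos pre c
    simp only [List.length_nil, zero_add, Finset.sum_range_one, List.take_nil, List.drop_nil,
      List.append_nil, List.nil_append, qweight, mul_one, muS_Sc_sdiff_SsetL]
    field_simp
  | cons a v ih =>
    have hshift : ∀ k ∈ Finset.range (v.length + 1),
        muS mu (Sc R c \ SsetL R (pre ++ (a :: v).take (k + 1))) *
            qweight R lam mu pre ((a :: v).take (k + 1) ++ c :: (a :: v).drop (k + 1)) =
          lam a / muS mu (SsetL R (pre ++ [a])) *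
            (muS mu (Sc R c \ SsetL R (pre ++ [a] ++ v.take k)) *
              qweight R lam mu (pre ++ [a]) (v.take k ++ c :: v.drop k)) := by
      intro k _
      rw [List.take_succ_cons, List.drop_succ_cons, List.cons_append, qweight,
        List.append_cons pre a]
      ring
    rw [List.length_cons, Finset.sum_range_succ', Finset.sum_congr rfl hshift, ← Finset.mul_sum,
      ih (pre ++ [a])]
    simp only [List.take_zero, List.drop_zero, List.nil_append, List.append_nil,
      muS_Sc_sdiff_SsetL]
    have hc := hpos pre c
    have ha := hpos pre a
    have hac := hpos (pre ++ [a]) c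
    rw [qweight, qweight, qweight, qweight_congr_of_SsetL_eq R lam mu
      (SsetL_append_pair_comm R pre c a), SsetL_append_pair_comm R pre c a]
    field_simp
    ring

lemma sum_muS_sdiff_mul_qweight_insert_nil (hmu : ∀ s, 0 < mu s)
    (hScne : ∀ c : C, (Sc R c).Nonempty) (w : List C) (c : C) :
    ∑ k ∈ Finset.range (w.length + 1),
        muS mu (Sc R c \ SsetL R (w.take k)) *
          qweight R lam mu [] (w.take k ++ c :: w.drop k) =
      lam c * qweight R lam mu [] w := by
  simpa using sum_muS_sdiff_mul_qweight_insert R lam mu hmu hScne w [] c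

end qweight

theorem stmt4 {C S : Type*} [Fintype C] [Fintype S]
    [DecidableEq S]
    (R : C → S → Prop) [∀ c s, Decidable (R c s)]
    (lam : C → ℝ) (mu : S → ℝ)
    (hmu : ∀ s, 0 < mu s)
    (hScne : ∀ c : C, (Sc R c).Nonempty)
    (w : List C) :
    qweight R lam mu [] w * ((∑ c : C, lam c) + muS mu (SsetL R w)) =
      (match w.getLast? with
        | none => 0
        | some cL => lam cL * qweight R lam mu [] w.dropLast) +
      ∑ c : C, ∑ k ∈ Finset.range (w.length + 1),
        muS mu (Sc R c \ SsetL R (w.take k)) *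
          qweight R lam mu [] (w.take k ++ c :: w.drop k) := by
  have hdepartures : ∑ c : C, ∑ k ∈ Finset.range (w.length + 1),
      muS mu (Sc R c \ SsetL R (w.take k)) *
        qweight R lam mu [] (w.take k ++ c :: w.drop k) =
        (∑ c : C, lam c) * qweight R lam mu [] w := by
    rw [Finset.sum_mul]
    exact Finset.sum_congr rfl fun c _ =>
      sum_muS_sdiff_mul_qweight_insert_nil R lam mu hmu hScne w c
  rw [hdepartures]
  rcases List.eq_nil_or_concat' w with rfl | ⟨u, b, rfl⟩
  · simp [qweight]
  · rw [List.getLast?_concat, List.dropLast_concat, mul_add,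
      qweight_append_singleton_mul_muS R lam mu hmu hScne]
    dsimp only
    ring
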